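/- Let 1 ≤ p ≤ n, 1 ≤ i ≤ n, and let σ ∈ J_p(1,…,n+1) be such that σ^{−1}(i) ≤ p and σ^{−1}(i+1) ≥ p+1. Let τ = t ∘ σ, where t is the transposition of the values i and i+1 (so τ agrees with σ except that the value i is replaced by i+1 in the first increasing block and i+1 is replaced by i in the second). Then: (a) τ ∈ J_p(1,…,n+1); (b) (−1)^{τ} = −(−1)^{σ}; (c) for every parity function ε : {1,…,n+1} → ℤ/2, (−1)^{(σ^{−1})ᵒ} = (−1)^{(τ^{−1})ᵒ}·(−1)^{ε(σ^{−1}(i))·ε(σ^{−1}(i+1))}, where the exponent is the product of integer representatives. Moreover σ ↦ τ is an involution interchanging the shuffles with σ^{−1}(i) ≤ p < σ^{−1}(i+1) and those with σ^{−1}(i+1) ≤ p < σ^{−1}(i). -/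

import Mathlib

/-!
Composing with the transposition of two adjacent values `u ⋖ v` preserves the relative order of
every pair of values other than `{u, v}`. In a shuffle `σ` with `u` in the first block and `v` in
the second, that pair is never compared inside a block, so `swap u v * σ` is again a shuffle.
Swapping both coordinates matches the odd inversions of `σ⁻¹` with those of `σ⁻¹ * swap u v`,
except for the pair `(u, v)` itself: it is not an inversion of `σ⁻¹`, and it is an odd inversion
of `σ⁻¹ * swap u v` exactly when both positions `σ⁻¹ u`, `σ⁻¹ v` have odd parity.
-/

open Finset

/-- `(-1)^{σᵒ}`: the signature of the induced permutation `σᵒ` of the odd indices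
(with respect to the parity function `ε`), computed as `(-1)` to the number of
inversions of `σ` among positions carrying odd values. -/
def oddSign {n : ℕ} (σ : Equiv.Perm (Fin n)) (ε : Fin n → ZMod 2) : ℤ :=
  (-1 : ℤ) ^ (Finset.univ.filter fun q : Fin n × Fin n =>
      q.1 < q.2 ∧ ε (σ q.1) = 1 ∧ ε (σ q.2) = 1 ∧ σ q.2 < σ q.1).card

/-- The set `J_p(1,…,n)` of shuffles: permutations of `{1,…,n}` (here `Fin n`)
increasing on the first `p` positions and on the remaining `n - p` positions. -/
def shuffles (n p : ℕ) : Finset (Equiv.Perm (Fin n)) :=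
  Finset.univ.filter fun σ =>
    (∀ i j : Fin n, i < j → (j : ℕ) < p → σ i < σ j) ∧
    (∀ i j : Fin n, i < j → p ≤ (i : ℕ) → σ i < σ j)

theorem Equiv.swap_apply_lt_swap_apply_of_covBy {α : Type*} [LinearOrder α]
    {u v a b : α} (huv : u ⋖ v) (hab : a < b) (hne : (a, b) ≠ (u, v)) :
    swap u v a < swap u v b := by
  have := huv.lt
  rw [swap_apply_def, swap_apply_def]
  split_ifs <;> subst_vars
  all_goals first
    | order
    | exact absurd rfl hne
    | exact lt_of_le_of_ne (huv.le_of_lt hab) ‹_›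
    | exact lt_of_le_of_ne' (huv.ge_of_gt hab) ‹_›

theorem Equiv.swap_apply_lt_swap_apply_and_ne_iff_of_covBy {α : Type*} [LinearOrder α]
    {u v a b : α} (huv : u ⋖ v) :
    (swap u v a < swap u v b ∧ (swap u v a, swap u v b) ≠ (u, v)) ↔ (a < b ∧ (a, b) ≠ (u, v)) := by
  suffices key : ∀ a b : α, a < b → (a, b) ≠ (u, v) →
      swap u v a < swap u v b ∧ (swap u v a, swap u v b) ≠ (u, v) by
    refine ⟨fun h => ?_, fun h => key a b h.1 h.2⟩
    simpa only [swap_apply_self] using key _ _ h.1 h.2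
  intro a b hab hne
  refine ⟨swap_apply_lt_swap_apply_of_covBy huv hab hne, fun h => ?_⟩
  simp only [Prod.mk.injEq, swap_apply_eq_iff, swap_apply_left, swap_apply_right] at h
  obtain ⟨rfl, rfl⟩ := h
  exact lt_asymm hab huv.lt

section OddInversions

open Equiv Equiv.Perm

variable {n : ℕ}

def oddInversions (π : Perm (Fin n)) (ε : Fin n → ZMod 2) :
    Finset (Fin n × Fin n) :=
  univ.filter fun q => q.1 < q.2 ∧ ε (π q.1) = 1 ∧ ε (π q.2) = 1 ∧ π q.2 < π q.1

theorem mem_oddInversions {π : Perm (Fin n)} {ε : Fin n → ZMod 2} {q : Fin n × Fin n} :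
    q ∈ oddInversions π ε ↔ q.1 < q.2 ∧ ε (π q.1) = 1 ∧ ε (π q.2) = 1 ∧ π q.2 < π q.1 := by
  simp [oddInversions]

theorem oddSign_eq_neg_one_pow (π : Perm (Fin n)) (ε : Fin n → ZMod 2) :
    oddSign π ε = (-1) ^ #(oddInversions π ε) := rfl

theorem erase_oddInversions_mul_swap {π : Perm (Fin n)} {u v : Fin n} (huv : u ⋖ v)
    (ε : Fin n → ZMod 2) :
    (oddInversions (π * swap u v) ε).erase (u, v) =
      ((oddInversions π ε).erase (u, v)).map (prodCongr (swap u v) (swap u v)).toEmbedding := by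
  ext ⟨a, b⟩
  rw [mem_map_equiv, prodCongr_symm, symm_swap]
  simp only [mem_erase, mem_oddInversions, prodCongr_apply, Prod.map, mul_apply]
  have := swap_apply_lt_swap_apply_and_ne_iff_of_covBy huv (a := a) (b := b)
  tauto

theorem card_oddInversions_mul_swap {π : Perm (Fin n)} {u v : Fin n} (huv : u ⋖ v)
    (hπ : π u < π v) (ε : Fin n → ZMod 2) :
    #(oddInversions (π * swap u v) ε) = #(oddInversions π ε) + (ε (π u)).val * (ε (π v)).val := by
  have hu : (u, v) ∉ oddInversions π ε := by
    simp [mem_oddInversions, hπ.not_gt]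
  have hmem : (u, v) ∈ oddInversions (π * swap u v) ε ↔ ε (π u) = 1 ∧ ε (π v) = 1 := by
    simp [mem_oddInversions, huv.lt, hπ, and_comm]
  have herase : #((oddInversions (π * swap u v) ε).erase (u, v)) = #(oddInversions π ε) := by
    rw [erase_oddInversions_mul_swap huv, card_map, erase_eq_of_notMem hu]
  have hval : ∀ x y : ZMod 2, x.val * y.val = if x = 1 ∧ y = 1 then 1 else 0 := by decide
  rw [hval]
  by_cases h : (u, v) ∈ oddInversions (π * swap u v) ε
  · rw [if_pos (hmem.1 h), ← card_erase_add_one h, herase]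
  · rw [if_neg (mt hmem.2 h), ← herase, erase_eq_of_notMem h, add_zero]

theorem oddSign_eq_oddSign_mul_swap_mul {π : Perm (Fin n)} {u v : Fin n} (huv : u ⋖ v)
    (hπ : π u < π v) (ε : Fin n → ZMod 2) :
    oddSign π ε = oddSign (π * swap u v) ε * (-1) ^ ((ε (π u)).val * (ε (π v)).val) := by
  rw [oddSign_eq_neg_one_pow, oddSign_eq_neg_one_pow, card_oddInversions_mul_swap huv hπ,
    pow_add, mul_assoc, ← mul_pow, neg_one_mul, neg_neg, one_pow, mul_one]

end OddInversions

theorem swap_mul_mem_shuffles {m p : ℕ} {σ : Equiv.Perm (Fin m)} {u v : Fin m} (huv : u ⋖ v)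
    (hσ : σ ∈ shuffles m p) (hu : (σ⁻¹ u : ℕ) < p) (hv : p ≤ (σ⁻¹ v : ℕ)) :
    Equiv.swap u v * σ ∈ shuffles m p := by
  simp only [shuffles, mem_filter, mem_univ, true_and, Equiv.Perm.mul_apply] at hσ ⊢
  refine ⟨fun a b hab hb => ?_, fun a b hab ha => ?_⟩
  · refine Equiv.swap_apply_lt_swap_apply_of_covBy huv (hσ.1 a b hab hb) fun h => ?_
    obtain rfl : b = σ⁻¹ v := Equiv.Perm.eq_inv_iff_eq.2 (Prod.mk.inj h).2
    omega
  · refine Equiv.swap_apply_lt_swap_apply_of_covBy huv (hσ.2 a b hab ha) fun h => ?_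
    obtain rfl : a = σ⁻¹ u := Equiv.Perm.eq_inv_iff_eq.2 (Prod.mk.inj h).1
    omega

theorem shuffle_swap_adjacent_values_general (n p i : ℕ)
    (hi : 1 ≤ i)
    (vi vi1 : Fin (n + 1)) (hvi : (vi : ℕ) = i - 1) (hvi1 : (vi1 : ℕ) = i)
    (σ : Equiv.Perm (Fin (n + 1))) (hσ : σ ∈ shuffles (n + 1) p)
    (hlo : ((σ⁻¹ vi : Fin (n + 1)) : ℕ) < p)
    (hhi : p ≤ ((σ⁻¹ vi1 : Fin (n + 1)) : ℕ))
    (τ : Equiv.Perm (Fin (n + 1))) (hτ : τ = Equiv.swap vi vi1 * σ) :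
    τ ∈ shuffles (n + 1) p ∧
    (Equiv.Perm.sign τ : ℤ) = -(Equiv.Perm.sign σ : ℤ) ∧
    (∀ ε : Fin (n + 1) → ZMod 2,
      oddSign σ⁻¹ ε
        = oddSign τ⁻¹ ε * (-1 : ℤ) ^ ((ε (σ⁻¹ vi)).val * (ε (σ⁻¹ vi1)).val)) ∧
    Equiv.swap vi vi1 * τ = σ ∧
    ((τ⁻¹ vi1 : Fin (n + 1)) : ℕ) < p ∧ p ≤ ((τ⁻¹ vi : Fin (n + 1)) : ℕ) := by
  have hcov : vi ⋖ vi1 := Fin.covBy_iff.2 (Nat.covBy_iff_add_one_eq.2 (by omega))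
  have hτinv : τ⁻¹ = σ⁻¹ * Equiv.swap vi vi1 := by rw [hτ, mul_inv_rev, Equiv.swap_inv]
  subst hτ
  refine ⟨swap_mul_mem_shuffles hcov hσ hlo hhi, ?_, fun ε => ?_, Equiv.swap_mul_self_mul _ _ σ,
    ?_, ?_⟩
  · rw [Equiv.Perm.sign_mul, Equiv.Perm.sign_swap hcov.lt.ne, neg_one_mul, Units.val_neg]
  · rw [hτinv]
    exact oddSign_eq_oddSign_mul_swap_mul hcov (Fin.lt_def.2 (hlo.trans_le hhi)) ε
  · simpa [hτinv] using hlo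
  · simpa [hτinv] using hhi

/-- Let `1 ≤ p ≤ n`, `1 ≤ i ≤ n`, and `σ ∈ J_p(1,…,n+1)` with `σ⁻¹(i) ≤ p` and
`σ⁻¹(i+1) ≥ p+1`.  Let `τ = t ∘ σ` where `t` is the transposition of the values
`i` and `i+1` (`0`-based: the values `vi`, `vi1` with `vi = i−1`, `vi1 = i`).
Then (a) `τ ∈ J_p(1,…,n+1)`; (b) `(−1)^τ = −(−1)^σ`; (c) for every parity function
`ε`, `(−1)^{(σ⁻¹)ᵒ} = (−1)^{(τ⁻¹)ᵒ}·(−1)^{ε(σ⁻¹(i))·ε(σ⁻¹(i+1))}`; moreover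
`σ ↦ τ` is an involution interchanging the shuffles with `σ⁻¹(i) ≤ p < σ⁻¹(i+1)`
and those with `σ⁻¹(i+1) ≤ p < σ⁻¹(i)`. -/
theorem shuffle_swap_adjacent_values (n p i : ℕ) (hp : 1 ≤ p) (hpn : p ≤ n)
    (hi : 1 ≤ i) (hin : i ≤ n)
    (vi vi1 : Fin (n + 1)) (hvi : (vi : ℕ) = i - 1) (hvi1 : (vi1 : ℕ) = i)
    (σ : Equiv.Perm (Fin (n + 1))) (hσ : σ ∈ shuffles (n + 1) p)
    (hlo : ((σ⁻¹ vi : Fin (n + 1)) : ℕ) < p)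
    (hhi : p ≤ ((σ⁻¹ vi1 : Fin (n + 1)) : ℕ))
    (τ : Equiv.Perm (Fin (n + 1))) (hτ : τ = Equiv.swap vi vi1 * σ) :
    τ ∈ shuffles (n + 1) p ∧
    (Equiv.Perm.sign τ : ℤ) = -(Equiv.Perm.sign σ : ℤ) ∧
    (∀ ε : Fin (n + 1) → ZMod 2,
      oddSign σ⁻¹ ε
        = oddSign τ⁻¹ ε * (-1 : ℤ) ^ ((ε (σ⁻¹ vi)).val * (ε (σ⁻¹ vi1)).val)) ∧
    Equiv.swap vi vi1 * τ = σ ∧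
    ((τ⁻¹ vi1 : Fin (n + 1)) : ℕ) < p ∧ p ≤ ((τ⁻¹ vi : Fin (n + 1)) : ℕ) :=
  shuffle_swap_adjacent_values_general n p i hi vi vi1 hvi hvi1 σ hσ hlo hhi τ hτ
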